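/- (Deterministic Lagrange multiplier bound for empirical likelihood) Let Z_1,…,Z_n be real numbers and let λ ∈ ℝ satisfy 1 + λZ_i > 0 for every i = 1,…,n and ∑_{i=1}^n Z_i/(1 + λZ_i) = 0. Then |λ| · (n⁻¹ ∑_{i=1}^n Z_i²) ≤ (1 + |λ| · max_{1≤i≤n}|Z_i|) · |n⁻¹ ∑_{i=1}^n Z_i|. -/

import Mathlib

/-!
Since `z = z / (1 + λz) + λ · z² / (1 + λz)`, the constraint `∑ Zᵢ / (1 + λZᵢ) = 0` gives
`∑ Zᵢ = λ S` with `S = ∑ Zᵢ² / (1 + λZᵢ) ≥ 0`, so `|∑ Zᵢ| = |λ| S`. On the other hand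
`0 < 1 + λZᵢ ≤ 1 + |λ| max |Zᵢ|` bounds each `Zᵢ²` by `(1 + |λ| max |Zᵢ|) · Zᵢ² / (1 + λZᵢ)`,
and summing and multiplying by `|λ|` gives the inequality.
-/

open Finset

theorem sum_eq_mul_sum_sq_div_of_sum_div_eq_zero {ι : Type*} (s : Finset ι) (Z : ι → ℝ)
    (lam : ℝ) (hne : ∀ i ∈ s, 1 + lam * Z i ≠ 0)
    (hsol : ∑ i ∈ s, Z i / (1 + lam * Z i) = 0) :
    ∑ i ∈ s, Z i = lam * ∑ i ∈ s, Z i ^ 2 / (1 + lam * Z i) := by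
  have hsplit : ∀ i ∈ s, Z i = Z i / (1 + lam * Z i) + lam * (Z i ^ 2 / (1 + lam * Z i)) := by
    intro i hi
    rw [mul_div_assoc', ← add_div, eq_div_iff (hne i hi)]
    ring
  rw [sum_congr rfl hsplit, sum_add_distrib, hsol, zero_add, mul_sum]

theorem sq_le_mul_sq_div_one_add_mul {z lam M : ℝ} (hpos : 0 < 1 + lam * z) (hz : |z| ≤ M) :
    z ^ 2 ≤ (1 + |lam| * M) * (z ^ 2 / (1 + lam * z)) := by
  have hle : 1 + lam * z ≤ 1 + |lam| * M := by
    have := mul_le_mul_of_nonneg_left hz (abs_nonneg lam)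
    rw [← abs_mul] at this
    linarith [le_abs_self (lam * z)]
  rw [mul_div_assoc', le_div_iff₀ hpos]
  exact (mul_le_mul_of_nonneg_left hle (sq_nonneg z)).trans_eq (mul_comm _ _)

theorem abs_mul_sum_sq_le_of_sum_div_eq_zero {ι : Type*} (s : Finset ι) (Z : ι → ℝ)
    (lam M : ℝ) (hpos : ∀ i ∈ s, 0 < 1 + lam * Z i)
    (hsol : ∑ i ∈ s, Z i / (1 + lam * Z i) = 0) (hM : ∀ i ∈ s, |Z i| ≤ M) :
    |lam| * ∑ i ∈ s, Z i ^ 2 ≤ (1 + |lam| * M) * |∑ i ∈ s, Z i| := by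
  set S := ∑ i ∈ s, Z i ^ 2 / (1 + lam * Z i)
  have hS : 0 ≤ S := sum_nonneg fun i hi => div_nonneg (sq_nonneg _) (hpos i hi).le
  have hsum : ∑ i ∈ s, Z i = lam * S :=
    sum_eq_mul_sum_sq_div_of_sum_div_eq_zero s Z lam (fun i hi => (hpos i hi).ne') hsol
  have hsq : ∑ i ∈ s, Z i ^ 2 ≤ (1 + |lam| * M) * S := by
    rw [mul_sum]
    exact sum_le_sum fun i hi => sq_le_mul_sq_div_one_add_mul (hpos i hi) (hM i hi)
  calc |lam| * ∑ i ∈ s, Z i ^ 2 ≤ |lam| * ((1 + |lam| * M) * S) :=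
        mul_le_mul_of_nonneg_left hsq (abs_nonneg lam)
    _ = (1 + |lam| * M) * |∑ i ∈ s, Z i| := by
        rw [hsum, abs_mul, abs_of_nonneg hS]
        ring

/-- Deterministic Lagrange multiplier bound for empirical likelihood: if
`1 + λZᵢ > 0` for all `i` and `∑ Zᵢ/(1+λZᵢ) = 0`, then
`|λ|·(n⁻¹∑Zᵢ²) ≤ (1 + |λ|·maxᵢ|Zᵢ|)·|n⁻¹∑Zᵢ|`. -/
theorem stmt_16 {n : ℕ} (hn : 0 < n) (Z : Fin n → ℝ) (lam : ℝ)
    (hpos : ∀ i, 0 < 1 + lam * Z i)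
    (hsol : ∑ i, Z i / (1 + lam * Z i) = 0) :
    |lam| * ((n : ℝ)⁻¹ * ∑ i, (Z i) ^ 2) ≤
      (1 + |lam| *
          Finset.univ.sup' (Finset.univ_nonempty_iff.mpr (Fin.pos_iff_nonempty.mp hn))
            (fun i => |Z i|)) *
        |(n : ℝ)⁻¹ * ∑ i, Z i| := by
  have key := abs_mul_sum_sq_le_of_sum_div_eq_zero univ Z lam
    (univ.sup' (univ_nonempty_iff.mpr (Fin.pos_iff_nonempty.mp hn)) fun i => |Z i|)
    (fun i _ => hpos i) hsol (fun i hi => le_sup' (fun i => |Z i|) hi)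
  have hscaled := mul_le_mul_of_nonneg_left key (inv_nonneg.mpr (n.cast_nonneg : (0 : ℝ) ≤ n))
  rw [abs_mul, abs_inv, Nat.abs_cast]
  linear_combination hscaled
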